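/- Let f₁, …, f_k : ℕ → ℝ satisfy a convolution-recursive system σf_i = p_i(f₁,…,f_k) where each p_i is a convolution polynomial with rational coefficients. Then the system of formal power series equations G_i(x) = f_i(0) + x · p̂_i(G₁(x),…,G_k(x)), where p̂_i is p_i with convolution replaced by the product of power series, has a unique solution in formal power series, namely G_i = g_{f_i}, the generating functions of the f_i. -/

import Mathlib

/-!
The generating functions solve the system because `mk f = C (f 0) + X * mk (σ f)`. Conversely,
two solutions agree modulo `X ^ n` for every `n`: evaluating a polynomial preserves congruence
modulo the ideal `(X ^ n)`, and the extra factor `X` raises the exponent by one.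
-/

/-- Interpretation of a convolution polynomial with rational coefficients on a
tuple of formal power series: multiplication of power series corresponds to
convolution of sequences and constants `k ∈ ℚ` to the sequence `k,0,0,…`. -/
noncomputable def convPolyEval {k : ℕ} (p : MvPolynomial (Fin k) ℚ)
    (G : Fin k → PowerSeries ℝ) : PowerSeries ℝ :=
  MvPolynomial.aeval G p

open PowerSeries

theorem MvPolynomial.aeval_sub_aeval_mem {R A σ : Type*} [CommSemiring R] [CommRing A]
    [Algebra R A] (I : Ideal A) (p : MvPolynomial σ R) {G H : σ → A}
    (h : ∀ j, G j - H j ∈ I) : aeval G p - aeval H p ∈ I := by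
  rw [← Ideal.Quotient.eq, ← Ideal.Quotient.mkₐ_eq_mk R, comp_aeval_apply, comp_aeval_apply]
  congr 2 with j
  exact Ideal.Quotient.eq.mpr (h j)

theorem PowerSeries.eq_of_forall_X_pow_dvd_sub {R : Type*} [CommRing R] {φ ψ : R⟦X⟧}
    (h : ∀ n, (X : R⟦X⟧) ^ n ∣ φ - ψ) : φ = ψ := by
  ext m
  rw [← sub_eq_zero, ← map_sub]
  exact X_pow_dvd_iff.mp (h (m + 1)) m m.lt_succ_self

theorem PowerSeries.mk_eq_C_add_X_mul_mk_succ {R : Type*} [Semiring R] (f : ℕ → R) :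
    mk f = C (f 0) + X * mk fun n => f (n + 1) := by
  rw [add_comm, eq_X_mul_shift_add_const (mk f)]
  simp

/- The factor `X` turns agreement of two solutions modulo `X ^ n` into agreement
modulo `X ^ (n + 1)`. -/
theorem PowerSeries.eq_of_eq_C_add_X_mul_aeval {R A σ : Type*} [CommSemiring R] [CommRing A]
    [Algebra R A] (a : σ → A) (p : σ → MvPolynomial σ R) {G H : σ → A⟦X⟧}
    (hG : ∀ i, G i = C (a i) + X * MvPolynomial.aeval G (p i))
    (hH : ∀ i, H i = C (a i) + X * MvPolynomial.aeval H (p i)) : G = H := by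
  have hdvd : ∀ n i, (X : A⟦X⟧) ^ n ∣ G i - H i := by
    intro n
    induction n with
    | zero => simp
    | succ n ih =>
      intro i
      have hdiff : G i - H i = X * (MvPolynomial.aeval G (p i) - MvPolynomial.aeval H (p i)) := by
        rw [hG i, hH i]; ring
      rw [hdiff, pow_succ']
      refine mul_dvd_mul_left X (Ideal.mem_span_singleton.mp ?_)
      exact MvPolynomial.aeval_sub_aeval_mem _ (p i) fun j => Ideal.mem_span_singleton.mpr (ih j)
  funext i
  exact eq_of_forall_X_pow_dvd_sub fun n => hdvd n i

/-- If the sequences `f₁, …, f_k : ℕ → ℝ` satisfy a convolution-recursive system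
`σfᵢ = pᵢ(f₁,…,f_k)` (expressed coefficient-wise: `fᵢ(n+1)` is the `n`-th term of
the convolution polynomial `pᵢ` applied to the sequences), then the associated
system of power series equations `Gᵢ = fᵢ(0) + X · p̂ᵢ(G₁,…,G_k)` has a unique
formal power series solution, namely the generating functions `g_{fᵢ} = mk (fᵢ)`. -/
theorem genFun_unique_solution {k : ℕ} (f : Fin k → ℕ → ℝ)
    (p : Fin k → MvPolynomial (Fin k) ℚ)
    (hrec : ∀ i n, f i (n + 1) =
      PowerSeries.coeff n (convPolyEval (p i) (fun j => PowerSeries.mk (f j)))) :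
    ∀ G : Fin k → PowerSeries ℝ,
      (∀ i, G i = PowerSeries.C (f i 0) + PowerSeries.X * convPolyEval (p i) G)
        ↔ G = fun i => PowerSeries.mk (f i) := by
  have hsol : ∀ i, mk (f i) = C (f i 0) + X * convPolyEval (p i) fun j => mk (f j) := by
    intro i
    rw [mk_eq_C_add_X_mul_mk_succ]
    congr 2
    ext n
    rw [coeff_mk, hrec]
  intro G
  refine ⟨fun hG => eq_of_eq_C_add_X_mul_aeval (fun i => f i 0) p hG hsol, ?_⟩
  rintro rfl
  exact hsol
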